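/- Let 0 < α ≤ ∞, n ∈ ℕ with n ≥ 3, and let f be a real function on (-α,α). Then f is S-monotone of order n if and only if f is differentiable on (-α,α) and its derivative f' is S-positive of order n. -/

import Mathlib

open Matrix

/-- `x` lies in the open interval `(-a, a)`, where `a ∈ (0, ∞]` is an extended real. -/
def MemI (a : EReal) (x : ℝ) : Prop := -a < (x : EReal) ∧ (x : EReal) < a

/-- `x` lies in the open interval `(0, a)`. -/
def MemP (a : EReal) (x : ℝ) : Prop := 0 < x ∧ (x : EReal) < a

/-- All entries of the matrix `A` lie in `(-a, a)`. -/
def EntriesIn (a : EReal) {n : ℕ} (A : Matrix (Fin n) (Fin n) ℝ) : Prop :=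
  ∀ i j, MemI a (A i j)

/-- `f` is S-positive (Schur positive) of order `n` on `(-a, a)`. -/
def SPos (a : EReal) (f : ℝ → ℝ) (n : ℕ) : Prop :=
  ∀ A : Matrix (Fin n) (Fin n) ℝ, EntriesIn a A → A.PosSemidef → (A.map f).PosSemidef

/-- `f` is S-monotone (Schur monotone) of order `n` on `(-a, a)`. -/
def SMono (a : EReal) (f : ℝ → ℝ) (n : ℕ) : Prop :=
  ∀ A B : Matrix (Fin n) (Fin n) ℝ, A.IsSymm → B.IsSymm →
    EntriesIn a A → EntriesIn a B →
    B.PosSemidef → (A - B).PosSemidef →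
    (A.map f - B.map f).PosSemidef

/-- `f` is S-convex (Schur convex) of order `n` on `(-a, a)`. -/
def SConv (a : EReal) (f : ℝ → ℝ) (n : ℕ) : Prop :=
  ∀ A B : Matrix (Fin n) (Fin n) ℝ, A.IsSymm → B.IsSymm →
    EntriesIn a A → EntriesIn a B →
    B.PosSemidef → (A - B).PosSemidef →
    ∀ t : ℝ, 0 ≤ t → t ≤ 1 →
    (t • A.map f + (1 - t) • B.map f - (t • A + (1 - t) • B).map f).PosSemidef

/-!
If `f'` is S-positive, then along the segment `C t = B + t (A - B)` the derivative of
`t ↦ yᵀ f[C t] y` is `yᵀ (f'[C t] ∘ (A - B)) y ≥ 0` by the Schur product theorem, so `f` is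
S-monotone.

Conversely, S-monotonicity of order 1 makes `f` monotone on `[0, α)`, hence differentiable at some
`w > |x|`. Applying S-monotonicity of order 3 to `B = [[w,x,x],[x,w,w],[x,w,w]] ≤ B + v vᵀ`,
`v = (τ, δ/τ, δ'/τ)`, bounds the difference of two difference quotients of `f` at `x` by second
differences of difference quotients of `f` at `w`, which tend to `0`; so the difference quotients
at `x` form a Cauchy family and `f` is differentiable at `x`. Finally `zᵀ f'[A] z` is the
derivative at `0` of `t ↦ 𝟙ᵀ f[A + t z zᵀ] 𝟙`, which is nondecreasing for `t ≥ 0`.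
-/

open Filter Topology Set MeasureTheory

lemma memI_iff_abs_lt {a : EReal} {x : ℝ} : MemI a x ↔ ((|x| : ℝ) : EReal) < a := by
  rw [MemI, EReal.neg_lt_comm, ← EReal.coe_neg]
  rcases abs_cases x with ⟨h, hx⟩ | ⟨h, hx⟩ <;> rw [h]
  · exact ⟨And.right, fun h' => ⟨(EReal.coe_le_coe_iff.2 (by linarith)).trans_lt h', h'⟩⟩
  · exact ⟨And.left, fun h' => ⟨h', (EReal.coe_le_coe_iff.2 (by linarith)).trans_lt h'⟩⟩

lemma isOpen_setOf_memI (a : EReal) : IsOpen {x : ℝ | MemI a x} :=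
  isOpen_Ioo.preimage continuous_coe_real_ereal

lemma ordConnected_setOf_memI (a : EReal) : OrdConnected {x : ℝ | MemI a x} :=
  ordConnected_Ioo.preimage_mono fun _ _ => EReal.coe_le_coe

lemma ContinuousAt.eventually_memI {X : Type*} [TopologicalSpace X] {a : EReal} {g : X → ℝ}
    {p : X} (hg : ContinuousAt g p) (hp : MemI a (g p)) : ∀ᶠ q in 𝓝 p, MemI a (g q) :=
  hg.eventually_mem ((isOpen_setOf_memI a).mem_nhds hp)

section EntriesIn

variable {a : EReal} {n : ℕ} {A : Matrix (Fin n) (Fin n) ℝ}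

lemma EntriesIn.add_smul_sub {B : Matrix (Fin n) (Fin n) ℝ} (hA : EntriesIn a A)
    (hB : EntriesIn a B) {t : ℝ} (ht : t ∈ Icc (0 : ℝ) 1) : EntriesIn a (A + t • (B - A)) :=
  fun i j => (ordConnected_setOf_memI a).convex.add_smul_sub_mem (hA i j) (hB i j) ht

lemma EntriesIn.eventually_add_smul (hA : EntriesIn a A) (D : Matrix (Fin n) (Fin n) ℝ) :
    ∀ᶠ t : ℝ in 𝓝 0, EntriesIn a (A + t • D) := by
  simp only [EntriesIn, eventually_all]
  intro i j
  have hcont : Continuous fun t : ℝ => (A + t • D) i j := by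
    simp only [Matrix.add_apply, Matrix.smul_apply, smul_eq_mul]
    fun_prop
  exact hcont.continuousAt.eventually_memI (by simpa using hA i j)

end EntriesIn

lemma posSemidef_of_const {ι : Type*} [Fintype ι] {c : ℝ} (hc : 0 ≤ c) :
    (Matrix.of fun _ _ : ι => c).PosSemidef := by
  convert (posSemidef_vecMulVec_self_star (1 : ι → ℝ)).smul hc using 1
  ext i j
  simp

lemma posSemidef_three_of_abs_le {x w : ℝ} (hxw : |x| ≤ w) :
    (!![w, x, x; x, w, w; x, w, w]).PosSemidef := by
  have hplus : 0 ≤ (w + x) / 2 := by linarith [neg_abs_le x]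
  have hminus : 0 ≤ (w - x) / 2 := by linarith [le_abs_self x]
  convert ((posSemidef_vecMulVec_self_star (![1, 1, 1] : Fin 3 → ℝ)).smul hplus).add
    ((posSemidef_vecMulVec_self_star (![1, -1, -1] : Fin 3 → ℝ)).smul hminus) using 1
  ext i j
  fin_cases i <;> fin_cases j <;> simp <;> ring

lemma hasDerivAt_dotProduct_map_add_smul_mulVec {ι : Type*} [Fintype ι] {f : ℝ → ℝ}
    (A D : Matrix ι ι ℝ) (y : ι → ℝ) {t : ℝ}
    (hf : ∀ i j, DifferentiableAt ℝ f (A i j + t * D i j)) :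
    HasDerivAt (fun s => y ⬝ᵥ ((A + s • D).map f *ᵥ y))
      (y ⬝ᵥ (((A + t • D).map (deriv f) ⊙ D) *ᵥ y)) t := by
  simp only [dotProduct, mulVec, map_apply, Matrix.add_apply, Matrix.smul_apply, smul_eq_mul,
    hadamard_apply]
  refine HasDerivAt.fun_sum fun i _ => (HasDerivAt.fun_sum fun j _ => ?_).const_mul (y i)
  have hpath := (hasDerivAt_mul_const (D i j)).const_add (A i j) (x := t)
  simpa [mul_assoc] using ((hf i j).hasDerivAt.comp t hpath).mul_const (y j)

lemma MonotoneOn.exists_differentiableAt {f : ℝ → ℝ} {b c : ℝ} (hf : MonotoneOn f (Ioo b c))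
    (hbc : b < c) : ∃ w ∈ Ioo b c, DifferentiableAt ℝ f w := by
  have : (ae (volume.restrict (Ioo b c))).NeBot := ae_restrict_neBot.2 (by simp [hbc])
  obtain ⟨w, hw, hdiff⟩ := ((ae_restrict_mem measurableSet_Ioo).and
    (hf.ae_differentiableWithinAt measurableSet_Ioo)).exists
  exact ⟨w, hw, hdiff.differentiableAt (Ioo_mem_nhds hw.1 hw.2)⟩

lemma tendsto_mul_div_nhdsNE {c : ℝ} (hc : c ≠ 0) :
    Tendsto (fun p : ℝ × ℝ => p.1 * p.2 / c) (𝓝[≠] 0 ×ˢ 𝓝[≠] 0) (𝓝[≠] 0) := by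
  refine tendsto_nhdsWithin_iff.2 ⟨?_, ?_⟩
  · have : Tendsto (fun p : ℝ × ℝ => p.1 * p.2 / c) (𝓝 (0, 0)) (𝓝 0) := by
      simpa using ((continuous_fst.mul continuous_snd).div_const c).tendsto (0, 0)
    exact this.mono_left (nhds_prod_eq (x := (0 : ℝ)) (y := (0 : ℝ)) ▸
      prod_mono nhdsWithin_le_nhds nhdsWithin_le_nhds)
  · filter_upwards [prod_mem_prod self_mem_nhdsWithin self_mem_nhdsWithin] with p hp
    exact div_ne_zero (mul_ne_zero hp.1 hp.2) hc

lemma HasDerivAt.tendsto_second_difference {f : ℝ → ℝ} {w L c : ℝ} (hf : HasDerivAt f L w)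
    (hc : c ≠ 0) :
    Tendsto (fun p : ℝ × ℝ => (f (w + p.1 * p.1 / c) - f w) / (p.1 * p.1)
      - 2 * ((f (w + p.1 * p.2 / c) - f w) / (p.1 * p.2))
      + (f (w + p.2 * p.2 / c) - f w) / (p.2 * p.2)) (𝓝[≠] 0 ×ˢ 𝓝[≠] 0) (𝓝 0) := by
  set l := 𝓝[≠] (0 : ℝ) ×ˢ 𝓝[≠] (0 : ℝ)
  set r : ℝ → ℝ := fun t => (f (w + t) - f w) / t
  have hr : Tendsto r (𝓝[≠] 0) (𝓝 L) := by simpa [r, div_eq_inv_mul] using hf.tendsto_slope_zero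
  have hdiag₁ : Tendsto (fun p : ℝ × ℝ => (p.1, p.1)) l l := tendsto_fst.prodMk tendsto_fst
  have hdiag₂ : Tendsto (fun p : ℝ × ℝ => (p.2, p.2)) l l := tendsto_snd.prodMk tendsto_snd
  have h₁₁ := hr.comp ((tendsto_mul_div_nhdsNE hc).comp hdiag₁)
  have h₁₂ := hr.comp (tendsto_mul_div_nhdsNE hc)
  have h₂₂ := hr.comp ((tendsto_mul_div_nhdsNE hc).comp hdiag₂)
  have hlim := ((h₁₁.sub (h₁₂.const_mul 2)).add h₂₂).div_const c
  rw [show (L - 2 * L + L) / c = 0 by ring] at hlim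
  refine hlim.congr' ?_
  filter_upwards [prod_mem_prod self_mem_nhdsWithin self_mem_nhdsWithin] with p ⟨hp₁, hp₂⟩
  rw [mem_compl_singleton_iff] at hp₁ hp₂
  simp only [Function.comp_apply, r]
  field_simp

lemma differentiableAt_of_eventually_slope_sub_le {f : ℝ → ℝ} {x : ℝ}
    (h : ∀ ε > 0, ∀ᶠ p in 𝓝[≠] (0 : ℝ) ×ˢ 𝓝[≠] 0,
      (f (x + p.2) - f x) / p.2 - (f (x + p.1) - f x) / p.1 ≤ ε) :
    DifferentiableAt ℝ f x := by
  set q : ℝ → ℝ := fun t => (f (x + t) - f x) / t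
  have hq : Cauchy (map q (𝓝[≠] 0)) := by
    refine cauchy_map_iff'.2 (Metric.uniformity_basis_dist.tendsto_right_iff.2 fun ε hε => ?_)
    filter_upwards [h (ε / 2) (half_pos hε), eventually_swap_iff.1 (h (ε / 2) (half_pos hε))]
      with p h₁ h₂
    rw [Prod.fst_swap, Prod.snd_swap] at h₂
    rw [Real.dist_eq, abs_lt]
    constructor <;> linarith
  obtain ⟨L, hL⟩ := cauchy_map_iff_exists_tendsto.1 hq
  exact (hasDerivAt_iff_tendsto_slope_zero.2 (by simpa [q, div_eq_inv_mul] using hL)).differentiableAt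

namespace SMono

variable {a : EReal} {f : ℝ → ℝ} {n : ℕ}

lemma posSemidef_map_sub (h : SMono a f n) {A B : Matrix (Fin n) (Fin n) ℝ}
    (hA : EntriesIn a A) (hB : EntriesIn a B) (hB₀ : B.PosSemidef) (hAB : (A - B).PosSemidef) :
    (A.map f - B.map f).PosSemidef := by
  have hA₀ : A.PosSemidef := by simpa using hAB.add hB₀
  exact h A B (isHermitian_iff_isSymm.1 hA₀.1) (isHermitian_iff_isSymm.1 hB₀.1) hA hB hB₀ hAB

lemma of_le {m : ℕ} (h : SMono a f n) (hm : 0 < m) (hmn : m ≤ n) : SMono a f m := by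
  intro A B _ _ hA hB hB₀ hAB
  have : Nonempty (Fin m) := ⟨⟨0, hm⟩⟩
  set r := Function.invFun (Fin.castLE hmn)
  have hr : ∀ i, r (Fin.castLE hmn i) = i :=
    Function.leftInverse_invFun (Fin.castLE_injective hmn)
  have key := h.posSemidef_map_sub (A := A.submatrix r r) (B := B.submatrix r r)
    (fun _ _ => hA _ _) (fun _ _ => hB _ _) (hB₀.submatrix r) (hAB.submatrix r)
  convert key.submatrix (Fin.castLE hmn) using 1
  ext i j
  simp [hr]

theorem of_differentiableAt_of_sPos (hd : ∀ x, MemI a x → DifferentiableAt ℝ f x)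
    (hp : SPos a (deriv f) n) : SMono a f n := by
  intro A B hAs hBs hA hB hB₀ hAB
  refine posSemidef_iff_dotProduct_mulVec.2
    ⟨isHermitian_iff_isSymm.2 ((hAs.map f).sub (hBs.map f)), fun y => ?_⟩
  set φ : ℝ → ℝ := fun s => y ⬝ᵥ ((B + s • (A - B)).map f *ᵥ y)
  have hφ : ∀ t ∈ Icc (0 : ℝ) 1,
      HasDerivAt φ (y ⬝ᵥ (((B + t • (A - B)).map (deriv f) ⊙ (A - B)) *ᵥ y)) t :=
    fun t ht => hasDerivAt_dotProduct_map_add_smul_mulVec B (A - B) y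
      fun i j => hd _ (hB.add_smul_sub hA ht i j)
  have hmono : MonotoneOn φ (Icc 0 1) := by
    refine monotoneOn_of_hasDerivWithinAt_nonneg (convex_Icc 0 1)
      (fun t ht => (hφ t ht).continuousAt.continuousWithinAt)
      (fun t ht => (hφ t (interior_subset ht)).hasDerivWithinAt) fun t ht => ?_
    have hC := hp _ (hB.add_smul_sub hA (interior_subset ht))
      (hB₀.add (hAB.smul (interior_subset ht).1))
    simpa using (hC.hadamard hAB).dotProduct_mulVec_nonneg y
  have h01 := hmono ⟨le_rfl, zero_le_one⟩ ⟨zero_le_one, le_rfl⟩ zero_le_one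
  simpa [φ, sub_mulVec, dotProduct_sub] using h01

theorem sPos_deriv (h : SMono a f n) (hd : ∀ x, MemI a x → DifferentiableAt ℝ f x) :
    SPos a (deriv f) n := by
  intro A hA hA₀
  refine posSemidef_iff_dotProduct_mulVec.2
    ⟨isHermitian_iff_isSymm.2 ((isHermitian_iff_isSymm.1 hA₀.1).map _), fun z => ?_⟩
  set D := vecMulVec z z
  set φ : ℝ → ℝ := fun s => 1 ⬝ᵥ ((A + s • D).map f *ᵥ 1)
  have hφ : HasDerivAt φ (1 ⬝ᵥ (((A + (0 : ℝ) • D).map (deriv f) ⊙ D) *ᵥ 1)) 0 :=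
    hasDerivAt_dotProduct_map_add_smul_mulVec A D 1 fun i j => by simpa using hd _ (hA i j)
  have hslope : ∀ᶠ t in 𝓝[>] 0, 0 ≤ t⁻¹ • (φ (0 + t) - φ 0) := by
    filter_upwards [nhdsWithin_le_nhds (hA.eventually_add_smul D), self_mem_nhdsWithin]
      with t hAt ht
    have hD : (A + t • D - A).PosSemidef := by
      simpa [D] using (posSemidef_vecMulVec_self_star z).smul (le_of_lt ht)
    have := (h.posSemidef_map_sub hAt hA hA₀ hD).dotProduct_mulVec_nonneg 1
    simp only [star_one, sub_mulVec, dotProduct_sub] at this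
    simpa [φ] using mul_nonneg (inv_nonneg.2 (le_of_lt ht)) (sub_nonneg.2 (le_of_sub_nonneg this))
  convert ge_of_tendsto hφ.tendsto_slope_zero_right hslope using 1
  simp only [D, zero_smul, add_zero, star_trivial, dotProduct, mulVec, hadamard_apply,
    vecMulVec_apply, Pi.one_apply, one_mul, mul_one, Finset.mul_sum]
  exact Finset.sum_congr rfl fun i _ => Finset.sum_congr rfl fun j _ => by ring

lemma monotoneOn (h : SMono a f 1) : MonotoneOn f {x | 0 ≤ x ∧ MemI a x} := by
  intro x ⟨hx₀, hx⟩ y ⟨_, hy⟩ hxy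
  have key := h.posSemidef_map_sub (A := Matrix.of fun _ _ => y) (B := Matrix.of fun _ _ => x)
    (fun _ _ => hy) (fun _ _ => hx) (posSemidef_of_const hx₀)
    (posSemidef_of_const (sub_nonneg.2 hxy))
  simpa using key.diag_nonneg (i := 0)

lemma exists_differentiableAt_gt_abs (h : SMono a f 1) {x : ℝ} (hx : MemI a x) :
    ∃ w, |x| < w ∧ MemI a w ∧ DifferentiableAt ℝ f w := by
  obtain ⟨c, hxc, hc⟩ := EReal.lt_iff_exists_real_btwn.1 (memI_iff_abs_lt.1 hx)
  have hxc : |x| < c := EReal.coe_lt_coe_iff.1 hxc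
  have hsub : Ioo |x| c ⊆ {y | 0 ≤ y ∧ MemI a y} := fun y hy =>
    ⟨(abs_nonneg x).trans hy.1.le, memI_iff_abs_lt.2 <| (EReal.coe_lt_coe_iff.2
      ((abs_of_nonneg ((abs_nonneg x).trans hy.1.le)).trans_lt hy.2)).trans hc⟩
  obtain ⟨w, hw, hdiff⟩ := (h.monotoneOn.mono hsub).exists_differentiableAt hxc
  exact ⟨w, hw.1, (hsub hw).2, hdiff⟩

lemma two_mul_slope_sub_le (h : SMono a f 3) {x w τ δ δ' σ : ℝ} (hxw : |x| ≤ w) (hτ : τ ≠ 0)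
    (hδ : δ ≠ 0) (hδ' : δ' ≠ 0) (hx : MemI a x) (hw : MemI a w) (hxδ : MemI a (x + δ))
    (hxδ' : MemI a (x + δ')) (hwτ : MemI a (w + τ ^ 2)) (hwδδ : MemI a (w + δ * δ / τ ^ 2))
    (hwδδ' : MemI a (w + δ * δ' / τ ^ 2)) (hwδ'δ' : MemI a (w + δ' * δ' / τ ^ 2)) :
    2 * σ * ((f (x + δ') - f x) / δ' - (f (x + δ) - f x) / δ) ≤
      f (w + τ ^ 2) - f w + σ ^ 2 * ((f (w + δ * δ / τ ^ 2) - f w) / (δ * δ)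
        - 2 * ((f (w + δ * δ' / τ ^ 2) - f w) / (δ * δ'))
        + (f (w + δ' * δ' / τ ^ 2) - f w) / (δ' * δ')) := by
  set B : Matrix (Fin 3) (Fin 3) ℝ := !![w, x, x; x, w, w; x, w, w]
  set A : Matrix (Fin 3) (Fin 3) ℝ :=
    !![w + τ ^ 2, x + δ, x + δ';
       x + δ, w + δ * δ / τ ^ 2, w + δ * δ' / τ ^ 2;
       x + δ', w + δ * δ' / τ ^ 2, w + δ' * δ' / τ ^ 2]
  have hAB : A - B = vecMulVec ![τ, δ / τ, δ' / τ] ![τ, δ / τ, δ' / τ] := by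
    ext i j
    fin_cases i <;> fin_cases j <;> simp [A, B] <;> field_simp
  have hA : EntriesIn a A := by
    intro i j
    fin_cases i <;> fin_cases j <;> assumption
  have hB : EntriesIn a B := by
    intro i j
    fin_cases i <;> fin_cases j <;> assumption
  have key := (h.posSemidef_map_sub hA hB (posSemidef_three_of_abs_le hxw)
    (hAB ▸ posSemidef_vecMulVec_self_star _)).dotProduct_mulVec_nonneg ![1, σ / δ, -(σ / δ')]
  simp only [dotProduct, mulVec, Fin.sum_univ_three, Matrix.sub_apply, map_apply, A, B, of_apply,
    cons_val', cons_val_zero, cons_val_one, cons_val, cons_val_fin_one, star_trivial] at key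
  linear_combination key

lemma eventually_slope_sub_le (h : SMono a f 3) {x w : ℝ} (hxw : |x| ≤ w) (hx : MemI a x)
    (hw : MemI a w) (hfw : DifferentiableAt ℝ f w) {ε : ℝ} (hε : 0 < ε) :
    ∀ᶠ p in 𝓝[≠] (0 : ℝ) ×ˢ 𝓝[≠] 0,
      (f (x + p.2) - f x) / p.2 - (f (x + p.1) - f x) / p.1 ≤ ε := by
  have hτ_ev : ∀ᶠ τ in 𝓝[≠] (0 : ℝ), MemI a (w + τ ^ 2) := nhdsWithin_le_nhds <|
    ContinuousAt.eventually_memI (g := fun τ : ℝ => w + τ ^ 2) (by fun_prop) (by simpa using hw)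
  obtain ⟨τ, hwτ, hτ : τ ≠ 0⟩ := (hτ_ev.and self_mem_nhdsWithin).exists
  set K := f (w + τ ^ 2) - f w
  -- `σ` is large enough that `K ≤ σ ε`; once the second difference is below `ε / σ`,
  -- `two_mul_slope_sub_le` bounds `2 σ` times the difference of quotients by `2 σ ε`.
  set σ := (|K| + 1) / ε
  have hσ : 0 < σ := by positivity
  have hKσ : K ≤ σ * ε := by
    rw [div_mul_cancel₀ _ hε.ne']
    linarith [le_abs_self K]
  have hT := hfw.hasDerivAt.tendsto_second_difference (pow_ne_zero 2 hτ)
  have hent : ∀ᶠ p : ℝ × ℝ in 𝓝 (0, 0), MemI a (x + p.1) ∧ MemI a (x + p.2) ∧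
      MemI a (w + p.1 * p.1 / τ ^ 2) ∧ MemI a (w + p.1 * p.2 / τ ^ 2) ∧
      MemI a (w + p.2 * p.2 / τ ^ 2) := by
    refine .and ?_ (.and ?_ (.and ?_ (.and ?_ ?_))) <;>
      exact ContinuousAt.eventually_memI (by fun_prop) (by simpa)
  rw [nhds_prod_eq] at hent
  filter_upwards [hent.filter_mono (prod_mono nhdsWithin_le_nhds nhdsWithin_le_nhds),
    hT.eventually (ge_mem_nhds (div_pos hε hσ)),
    prod_mem_prod self_mem_nhdsWithin self_mem_nhdsWithin]
    with p ⟨h₁, h₂, h₁₁, h₁₂, h₂₂⟩ hTp ⟨hp₁, hp₂⟩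
  rw [mem_compl_singleton_iff] at hp₁ hp₂
  have key := h.two_mul_slope_sub_le (σ := σ) hxw hτ hp₁ hp₂ hx hw h₁ h₂ hwτ h₁₁ h₁₂ h₂₂
  have hσ' : σ ^ 2 * (ε / σ) = σ * ε := by field_simp
  have hbracket := mul_le_mul_of_nonneg_left hTp (sq_nonneg σ)
  exact le_of_mul_le_mul_left (by linarith : 2 * σ * _ ≤ 2 * σ * ε) (by positivity)

theorem differentiableAt (h₁ : SMono a f 1) (h₃ : SMono a f 3) {x : ℝ} (hx : MemI a x) :
    DifferentiableAt ℝ f x := by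
  obtain ⟨w, hxw, hw, hfw⟩ := h₁.exists_differentiableAt_gt_abs hx
  exact differentiableAt_of_eventually_slope_sub_le fun _ hε =>
    h₃.eventually_slope_sub_le hxw.le hx hw hfw hε

end SMono

theorem stmt_9_general (a : EReal) (n : ℕ) (hn : 3 ≤ n) (f : ℝ → ℝ) :
    SMono a f n ↔
      ((∀ x, MemI a x → DifferentiableAt ℝ f x) ∧ SPos a (deriv f) n) := by
  refine ⟨fun h => ?_, fun ⟨hd, hp⟩ => SMono.of_differentiableAt_of_sPos hd hp⟩
  have hd : ∀ x, MemI a x → DifferentiableAt ℝ f x := fun _ hx =>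
    (h.of_le one_pos (by omega)).differentiableAt (h.of_le three_pos hn) hx
  exact ⟨hd, h.sPos_deriv hd⟩

/-- Theorem 3.2 (2): for `n ≥ 3`, `f` is S-monotone of order `n` on `(-α, α)` iff `f` is
differentiable on `(-α, α)` and `f'` is S-positive of order `n`. -/
theorem stmt_9 (a : EReal) (ha : 0 < a) (n : ℕ) (hn : 3 ≤ n) (f : ℝ → ℝ) :
    SMono a f n ↔
      ((∀ x, MemI a x → DifferentiableAt ℝ f x) ∧ SPos a (deriv f) n) :=
  stmt_9_general a n hn f
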